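/- arXiv:2206.14139 — 3 statements merged into one kernel-verified Lean document; each statement's English description precedes it below -/
import Mathlib

section
/- Let (X, 𝒜, μ) be a σ-finite measure space, n ≥ 1 an integer, d : X × X → [0,∞) a function, and (n+1)/2 < α < (n+2)/2. Let p : (0,∞) × X × X → [0,∞) be jointly measurable with p_t(x,·) ∈ L²(μ) for all t > 0, x ∈ X, and set P_t f(x) = ∫_X p_t(x,q) f(q) dμ(q). Assume there are constants C₀, C₁ > 0 such that for all f ∈ L²(μ), all t > 0 and all x, y ∈ X: |P_t f(x)| ≤ C₀ t^{−(n+1)/2} ‖f‖_{L²(μ)} and |P_t f(x) − P_t f(y)| ≤ C₁ d(x,y) t^{−(n+2)/2} ‖f‖_{L²(μ)}. Then, with C = (1/Γ(α)) · (2C₀/(α − (n+1)/2) + C₁/((n+2)/2 − α)), one has for all f ∈ L²(μ) and x, y ∈ X: ∫_0^∞ t^{α−1} |P_t f(x) − P_t f(y)| dt < ∞ and (1/Γ(α)) |∫_0^∞ t^{α−1} (P_t f(x) − P_t f(y)) dt| ≤ C · d(x,y)^{2α−(n+1)} · ‖f‖_{L²(μ)}. -/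
open MeasureTheory Set Filter

/-!
Write `G t = P_t f(x) - P_t f(y)` and `D = d(x,y)`. Ultracontractivity gives `|G t| ≲ t^{-(n+1)/2}`,
integrable against `t^{α-1}` near `0` because `α > (n+1)/2`; the regularization estimate gives
`|G t| ≲ D t^{-(n+2)/2}`, integrable at infinity because `α < (n+2)/2`. Splitting `(0, ∞)` at the
scale `T = D²`, where the two bounds balance, each piece contributes a multiple of `D^{2α-(n+1)}`.
-/

theorem measurable_integral_mul {T X : Type*} [MeasurableSpace T] [MeasurableSpace X]
    {μ : Measure X} [SFinite μ] {k : T → X → ℝ} (hk : Measurable (Function.uncurry k))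
    {f : X → ℝ} (hf : AEStronglyMeasurable f μ) :
    Measurable fun t => ∫ q, k t q * f q ∂μ := by
  obtain ⟨f', hf'sm, hff'⟩ := hf
  have hmeas : StronglyMeasurable fun t => ∫ q, k t q * f' q ∂μ :=
    (hk.mul (hf'sm.measurable.comp measurable_snd)).stronglyMeasurable.integral_prod_right'
  convert hmeas.measurable using 2 with t
  exact integral_congr_ae (hff'.mono fun q hq => by simp only [hq])

theorem integral_Ioc_zero_rpow {β : ℝ} (hβ : -1 < β) {T : ℝ} (hT : 0 ≤ T) :
    ∫ t in Ioc 0 T, t ^ β = T ^ (β + 1) / (β + 1) := by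
  rw [← intervalIntegral.integral_of_le hT, integral_rpow (Or.inl hβ),
    Real.zero_rpow (by linarith : β + 1 ≠ 0), sub_zero]

section SplitAtScale

variable {E : Type*} [NormedAddCommGroup E] {h : ℝ → E} {T A B β γ : ℝ}

theorem integrableOn_Ioc_of_norm_le_rpow (hT : 0 ≤ T) (hβ : -1 < β)
    (hh : AEStronglyMeasurable h (volume.restrict (Ioi 0)))
    (hsmall : ∀ t ∈ Ioc 0 T, ‖h t‖ ≤ A * t ^ β) : IntegrableOn h (Ioc 0 T) :=
  Integrable.mono' (((intervalIntegrable_iff_integrableOn_Ioc_of_le hT).mp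
      (intervalIntegral.intervalIntegrable_rpow' hβ)).const_mul A)
    (hh.mono_set Ioc_subset_Ioi_self) ((ae_restrict_iff' measurableSet_Ioc).mpr
      (Eventually.of_forall hsmall))

theorem integrableOn_Ioi_of_norm_le_rpow (hT : 0 < T) (hγ : γ < -1)
    (hh : AEStronglyMeasurable h (volume.restrict (Ioi 0)))
    (hlarge : ∀ t ∈ Ioi T, ‖h t‖ ≤ B * t ^ γ) : IntegrableOn h (Ioi T) :=
  Integrable.mono' ((integrableOn_Ioi_rpow_of_lt hγ hT).const_mul B)
    (hh.mono_set (Ioi_subset_Ioi hT.le)) ((ae_restrict_iff' measurableSet_Ioi).mpr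
      (Eventually.of_forall hlarge))

variable (hT : 0 < T) (hβ : -1 < β) (hγ : γ < -1)
    (hh : AEStronglyMeasurable h (volume.restrict (Ioi 0)))
    (hsmall : ∀ t ∈ Ioc 0 T, ‖h t‖ ≤ A * t ^ β) (hlarge : ∀ t ∈ Ioi T, ‖h t‖ ≤ B * t ^ γ)
include hT hβ hγ hh hsmall hlarge

theorem integrableOn_Ioi_zero_of_norm_le_rpow : IntegrableOn h (Ioi 0) := by
  rw [← Ioc_union_Ioi_eq_Ioi hT.le]
  exact (integrableOn_Ioc_of_norm_le_rpow hT.le hβ hh hsmall).union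
    (integrableOn_Ioi_of_norm_le_rpow hT hγ hh hlarge)

theorem integral_norm_Ioi_zero_le_of_norm_le_rpow :
    ∫ t in Ioi 0, ‖h t‖ ≤ A * (T ^ (β + 1) / (β + 1)) + B * (-T ^ (γ + 1) / (γ + 1)) := by
  have hsmall_int := (integrableOn_Ioc_of_norm_le_rpow hT.le hβ hh hsmall).norm
  have hlarge_int := (integrableOn_Ioi_of_norm_le_rpow hT hγ hh hlarge).norm
  rw [← Ioc_union_Ioi_eq_Ioi hT.le,
    setIntegral_union Ioc_disjoint_Ioi_same measurableSet_Ioi hsmall_int hlarge_int,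
    ← integral_Ioc_zero_rpow hβ hT.le, ← integral_Ioi_rpow_of_lt hγ hT,
    ← integral_const_mul, ← integral_const_mul]
  refine add_le_add ?_ ?_
  · exact setIntegral_mono_on hsmall_int
      (((intervalIntegrable_iff_integrableOn_Ioc_of_le hT.le).mp
        (intervalIntegral.intervalIntegrable_rpow' hβ)).const_mul A) measurableSet_Ioc hsmall
  · exact setIntegral_mono_on hlarge_int ((integrableOn_Ioi_rpow_of_lt hγ hT).const_mul B)
      measurableSet_Ioi hlarge

end SplitAtScale

theorem norm_rpow_mul_le_of_abs_le {t a e g C : ℝ} (ht : 0 < t) (hg : |g| ≤ C * t ^ e) :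
    ‖t ^ a * g‖ ≤ C * t ^ (a + e) := by
  rw [norm_mul, Real.norm_of_nonneg (Real.rpow_nonneg ht.le a), Real.rpow_add ht]
  calc t ^ a * |g| ≤ t ^ a * (C * t ^ e) := by gcongr
    _ = C * (t ^ a * t ^ e) := by ring

theorem integrableOn_and_abs_setIntegral_rpow_mul_le {G : ℝ → ℝ} {k α A B D : ℝ}
    (hG : AEStronglyMeasurable G (volume.restrict (Ioi 0)))
    (hα₁ : k / 2 < α) (hα₂ : α < (k + 1) / 2) (hD : 0 ≤ D)
    (hsmall : ∀ t, 0 < t → |G t| ≤ A * t ^ (-k / 2))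
    (hlarge : ∀ t, 0 < t → |G t| ≤ B * D * t ^ (-(k + 1) / 2)) :
    IntegrableOn (fun t => t ^ (α - 1) * |G t|) (Ioi 0) ∧
      |∫ t in Ioi 0, t ^ (α - 1) * G t| ≤
        (A / (α - k / 2) + B / ((k + 1) / 2 - α)) * D ^ (2 * α - k) := by
  rcases hD.eq_or_lt with rfl | hD
  · have hG0 : ∀ t ∈ Ioi (0 : ℝ), G t = 0 := fun t ht =>
      abs_nonpos_iff.mp (by simpa using hlarge t ht)
    refine ⟨integrableOn_zero.congr_fun (fun t ht => by simp [hG0 t ht]) measurableSet_Ioi, ?_⟩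
    rw [setIntegral_congr_fun (g := 0) measurableSet_Ioi (fun t ht => by simp [hG0 t ht]),
      Real.zero_rpow (by linarith)]
    simp
  have hnorm : EqOn (fun t => ‖t ^ (α - 1) * G t‖) (fun t => t ^ (α - 1) * |G t|) (Ioi 0) :=
    fun t ht => by
      simp only [norm_mul, Real.norm_of_nonneg (Real.rpow_nonneg (le_of_lt ht) _), Real.norm_eq_abs]
  set T := D ^ (2 : ℝ)
  have hT : 0 < T := Real.rpow_pos_of_pos hD 2
  have hh : AEStronglyMeasurable (fun t => t ^ (α - 1) * G t) (volume.restrict (Ioi 0)) :=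
    (measurable_id.pow_const _).aestronglyMeasurable.mul hG
  have hβ : -1 < α - 1 + -k / 2 := by linarith
  have hγ : α - 1 + -(k + 1) / 2 < -1 := by linarith
  have hsmall' : ∀ t ∈ Ioc 0 T, ‖t ^ (α - 1) * G t‖ ≤ A * t ^ (α - 1 + -k / 2) :=
    fun t ht => norm_rpow_mul_le_of_abs_le ht.1 (hsmall t ht.1)
  have hlarge' : ∀ t ∈ Ioi T, ‖t ^ (α - 1) * G t‖ ≤ B * D * t ^ (α - 1 + -(k + 1) / 2) :=
    fun t ht => norm_rpow_mul_le_of_abs_le (hT.trans ht) (hlarge t (hT.trans ht))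
  refine ⟨IntegrableOn.congr_fun
    (integrableOn_Ioi_zero_of_norm_le_rpow hT hβ hγ hh hsmall' hlarge').norm
    hnorm measurableSet_Ioi, ?_⟩
  calc |∫ t in Ioi 0, t ^ (α - 1) * G t|
      ≤ ∫ t in Ioi 0, ‖t ^ (α - 1) * G t‖ := by
        rw [← Real.norm_eq_abs]; exact norm_integral_le_integral_norm _
    _ ≤ A * (T ^ (α - 1 + -k / 2 + 1) / (α - 1 + -k / 2 + 1)) +
          B * D * (-T ^ (α - 1 + -(k + 1) / 2 + 1) / (α - 1 + -(k + 1) / 2 + 1)) :=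
      integral_norm_Ioi_zero_le_of_norm_le_rpow hT hβ hγ hh hsmall' hlarge'
    _ = (A / (α - k / 2) + B / ((k + 1) / 2 - α)) * D ^ (2 * α - k) := by
      have hTβ : T ^ (α - 1 + -k / 2 + 1) = D ^ (2 * α - k) := by
        rw [← Real.rpow_mul hD.le]; ring_nf
      have hTγ : D * T ^ (-((k + 1) / 2 - α)) = D ^ (2 * α - k) := by
        rw [← Real.rpow_mul hD.le, ← Real.rpow_one_add' hD.le (by linarith)]; ring_nf
      rw [hTβ, show α - 1 + -(k + 1) / 2 + 1 = -((k + 1) / 2 - α) by ring, div_neg]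
      linear_combination (B / ((k + 1) / 2 - α)) * hTγ

theorem frac_operator_holder_bound_general {X : Type*} [MeasurableSpace X] (μ : Measure X)
    [SigmaFinite μ] (n : ℕ) (d : X → X → ℝ) (hd : ∀ x y, 0 ≤ d x y)
    (α : ℝ) (hα1 : ((n : ℝ) + 1) / 2 < α) (hα2 : α < ((n : ℝ) + 2) / 2)
    (p : ℝ → X → X → ℝ)
    (hmeas : Measurable fun q : ℝ × X × X => p q.1 q.2.1 q.2.2)
    (C₀ C₁ : ℝ)
    (hultra : ∀ f : X → ℝ, MeasureTheory.MemLp f 2 μ → ∀ t : ℝ, 0 < t → ∀ x,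
      |∫ q, p t x q * f q ∂μ| ≤
        C₀ * t ^ (-((n : ℝ) + 1) / 2) * (MeasureTheory.eLpNorm f 2 μ).toReal)
    (hgrad : ∀ f : X → ℝ, MeasureTheory.MemLp f 2 μ → ∀ t : ℝ, 0 < t → ∀ x y,
      |(∫ q, p t x q * f q ∂μ) - ∫ q, p t y q * f q ∂μ| ≤
        C₁ * d x y * t ^ (-((n : ℝ) + 2) / 2) * (MeasureTheory.eLpNorm f 2 μ).toReal)
    (f : X → ℝ) (hf : MeasureTheory.MemLp f 2 μ) (x y : X) :
    MeasureTheory.IntegrableOn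
      (fun t : ℝ => t ^ (α - 1) * |(∫ q, p t x q * f q ∂μ) - ∫ q, p t y q * f q ∂μ|)
      (Set.Ioi 0) ∧
    (Real.Gamma α)⁻¹ *
        |∫ t in Set.Ioi (0 : ℝ),
          t ^ (α - 1) * ((∫ q, p t x q * f q ∂μ) - ∫ q, p t y q * f q ∂μ)| ≤
      (Real.Gamma α)⁻¹ * (2 * C₀ / (α - ((n : ℝ) + 1) / 2) + C₁ / (((n : ℝ) + 2) / 2 - α)) *
        d x y ^ (2 * α - ((n : ℝ) + 1)) * (MeasureTheory.eLpNorm f 2 μ).toReal := by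
  set N := (eLpNorm f 2 μ).toReal
  have hP : ∀ z, Measurable fun t => ∫ q, p t z q * f q ∂μ := fun z =>
    measurable_integral_mul (k := fun t q => p t z q) (hmeas.comp (measurable_fst.prodMk
      (measurable_const.prodMk measurable_snd))) hf.aestronglyMeasurable
  have hsmall : ∀ t : ℝ, 0 < t → |(∫ q, p t x q * f q ∂μ) - ∫ q, p t y q * f q ∂μ| ≤
      2 * C₀ * N * t ^ (-((n : ℝ) + 1) / 2) := fun t ht =>
    (abs_sub _ _).trans (by linarith [hultra f hf t ht x, hultra f hf t ht y])
  have hlarge : ∀ t : ℝ, 0 < t → |(∫ q, p t x q * f q ∂μ) - ∫ q, p t y q * f q ∂μ| ≤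
      C₁ * N * d x y * t ^ (-((n : ℝ) + 1 + 1) / 2) := fun t ht => by
    rw [show (n : ℝ) + 1 + 1 = n + 2 by ring]
    linarith [hgrad f hf t ht x y]
  obtain ⟨hint, hbound⟩ := integrableOn_and_abs_setIntegral_rpow_mul_le
    ((hP x).sub (hP y)).aestronglyMeasurable hα1 (by linarith) (hd x y) hsmall hlarge
  refine ⟨hint, ?_⟩
  have hΓ : 0 ≤ (Real.Gamma α)⁻¹ :=
    inv_nonneg.mpr (Real.Gamma_nonneg_of_nonneg (by linarith [(n.cast_nonneg : (0 : ℝ) ≤ n)]))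
  calc _ ≤ (Real.Gamma α)⁻¹ * ((2 * C₀ * N / (α - ((n : ℝ) + 1) / 2) +
        C₁ * N / (((n : ℝ) + 1 + 1) / 2 - α)) * d x y ^ (2 * α - ((n : ℝ) + 1))) :=
      mul_le_mul_of_nonneg_left hbound hΓ
    _ = _ := by rw [show (n : ℝ) + 1 + 1 = n + 2 by ring]; ring

/-- Hölder bound for the fractional operator: if `(n+1)/2 < α < (n+2)/2` and the semigroup
`P_t f(x) = ∫ p_t(x,q) f(q) dμ(q)` satisfies the ultracontractivity and regularization bounds,
then with `C = (1/Γ(α))(2C₀/(α−(n+1)/2) + C₁/((n+2)/2−α))`, for all `f ∈ L²(μ)` and `x, y`: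
`∫_0^∞ t^{α−1}|P_t f(x) − P_t f(y)| dt < ∞` and
`(1/Γ(α))|∫_0^∞ t^{α−1}(P_t f(x) − P_t f(y)) dt| ≤ C d(x,y)^{2α−(n+1)} ‖f‖_{L²(μ)}`. -/
theorem frac_operator_holder_bound {X : Type*} [MeasurableSpace X] (μ : Measure X)
    [SigmaFinite μ] (n : ℕ) (hn : 1 ≤ n) (d : X → X → ℝ) (hd : ∀ x y, 0 ≤ d x y)
    (α : ℝ) (hα1 : ((n : ℝ) + 1) / 2 < α) (hα2 : α < ((n : ℝ) + 2) / 2)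
    (p : ℝ → X → X → ℝ)
    (hmeas : Measurable fun q : ℝ × X × X => p q.1 q.2.1 q.2.2)
    (hnonneg : ∀ t x y, 0 ≤ p t x y)
    (hL2 : ∀ t : ℝ, 0 < t → ∀ x, MeasureTheory.MemLp (p t x) 2 μ)
    (C₀ C₁ : ℝ) (hC₀ : 0 < C₀) (hC₁ : 0 < C₁)
    (hultra : ∀ f : X → ℝ, MeasureTheory.MemLp f 2 μ → ∀ t : ℝ, 0 < t → ∀ x,
      |∫ q, p t x q * f q ∂μ| ≤
        C₀ * t ^ (-((n : ℝ) + 1) / 2) * (MeasureTheory.eLpNorm f 2 μ).toReal)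
    (hgrad : ∀ f : X → ℝ, MeasureTheory.MemLp f 2 μ → ∀ t : ℝ, 0 < t → ∀ x y,
      |(∫ q, p t x q * f q ∂μ) - ∫ q, p t y q * f q ∂μ| ≤
        C₁ * d x y * t ^ (-((n : ℝ) + 2) / 2) * (MeasureTheory.eLpNorm f 2 μ).toReal)
    (f : X → ℝ) (hf : MeasureTheory.MemLp f 2 μ) (x y : X) :
    MeasureTheory.IntegrableOn
      (fun t : ℝ => t ^ (α - 1) * |(∫ q, p t x q * f q ∂μ) - ∫ q, p t y q * f q ∂μ|)
      (Set.Ioi 0) ∧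
    (Real.Gamma α)⁻¹ *
        |∫ t in Set.Ioi (0 : ℝ),
          t ^ (α - 1) * ((∫ q, p t x q * f q ∂μ) - ∫ q, p t y q * f q ∂μ)| ≤
      (Real.Gamma α)⁻¹ * (2 * C₀ / (α - ((n : ℝ) + 1) / 2) + C₁ / (((n : ℝ) + 2) / 2 - α)) *
        d x y ^ (2 * α - ((n : ℝ) + 1)) * (MeasureTheory.eLpNorm f 2 μ).toReal :=
  frac_operator_holder_bound_general μ n d hd α hα1 hα2 p hmeas C₀ C₁ hultra hgrad f hf x y
end

section
/- Let (X, 𝒜, μ) be a σ-finite measure space, n ≥ 1 an integer, d : X × X → [0,∞) a function, and (n+1)/2 < α < (n+2)/2. Let p : (0,∞) × X × X → [0,∞) be jointly measurable with p_t(x,·) ∈ L²(μ) for all t > 0, x ∈ X, and set P_t f(x) = ∫_X p_t(x,q) f(q) dμ(q). Assume there are constants C₀, C₁ > 0 such that for all f ∈ L²(μ), all t > 0 and all x, y ∈ X: |P_t f(x)| ≤ C₀ t^{−(n+1)/2} ‖f‖_{L²(μ)} and |P_t f(x) − P_t f(y)| ≤ C₁ d(x,y) t^{−(n+2)/2} ‖f‖_{L²(μ)}.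 Then, with C = (1/Γ(α)) · (2C₀/(α − (n+1)/2) + C₁/((n+2)/2 − α)), for all x, y ∈ X there exists h ∈ L²(μ) with ‖h‖_{L²(μ)} ≤ C · d(x,y)^{2α−(n+1)} such that ∫_X h f dμ = (1/Γ(α)) ∫_0^∞ t^{α−1} (P_t f(x) − P_t f(y)) dt for every f ∈ L²(μ). -/
/-!
Write `F(t) = P_t f(x) - P_t f(y)`. Ultracontractivity gives `|F(t)| ≤ 2 C₀ t^(-(n+1)/2) ‖f‖₂`,
which is integrable against `t^(α-1)` near `0`, and the gradient bound gives
`|F(t)| ≤ C₁ d(x,y) t^(-(n+2)/2) ‖f‖₂`, integrable against `t^(α-1)` near `∞`. Splitting the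
`t`-integral at the parabolic scale `t = d(x,y)²` turns both pieces into multiples of
`d(x,y)^(2α-(n+1)) ‖f‖₂`, so `f ↦ Γ(α)⁻¹ ∫₀^∞ t^(α-1) F(t) dt` is a bounded linear functional
on `L²(μ)`, and the Riesz representation theorem provides `h`.
-/

open MeasureTheory Set

section PowerIntegrals

variable {T a b : ℝ}

lemma integrableOn_Ioi_ite_rpow (hT : 0 < T) (ha : -1 < a) (hb : b < -1) (A B : ℝ) :
    IntegrableOn (fun t : ℝ => if t ≤ T then A * t ^ a else B * t ^ b) (Ioi 0) := by
  rw [← Ioc_union_Ioi_eq_Ioi hT.le]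
  refine IntegrableOn.union ?_ ?_
  · refine IntegrableOn.congr_fun ?_ (fun t ht => (if_pos ht.2).symm) measurableSet_Ioc
    exact (intervalIntegral.intervalIntegrable_rpow' ha).1.const_mul A
  · refine IntegrableOn.congr_fun ?_ (fun t ht => (if_neg (not_le.mpr ht)).symm)
      measurableSet_Ioi
    exact (integrableOn_Ioi_rpow_of_lt hb hT).const_mul B

lemma integral_Ioi_ite_rpow (hT : 0 < T) (ha : -1 < a) (hb : b < -1) (A B : ℝ) :
    ∫ t in Ioi 0, (if t ≤ T then A * t ^ a else B * t ^ b) =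
      A * (T ^ (a + 1) / (a + 1)) - B * (T ^ (b + 1) / (b + 1)) := by
  have hint := integrableOn_Ioi_ite_rpow hT ha hb A B
  rw [← Ioc_union_Ioi_eq_Ioi hT.le] at hint ⊢
  rw [setIntegral_union (Ioc_disjoint_Ioi le_rfl) measurableSet_Ioi
      (hint.mono_set subset_union_left) (hint.mono_set subset_union_right),
    setIntegral_congr_fun measurableSet_Ioc (fun t ht => if_pos ht.2),
    setIntegral_congr_fun measurableSet_Ioi (fun t ht => if_neg (not_le.mpr ht)),
    ← intervalIntegral.integral_of_le hT.le, intervalIntegral.integral_const_mul,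
    integral_rpow (Or.inl ha), Real.zero_rpow (by linarith), integral_const_mul,
    integral_Ioi_rpow_of_lt hb hT]
  ring

end PowerIntegrals

section Decay

variable {F : ℝ → ℝ} {α r s a b : ℝ}

lemma norm_rpow_mul_le_ite (hF₀ : ∀ t > 0, |F t| ≤ a * t ^ (-r))
    (hF₁ : ∀ t > 0, |F t| ≤ b * t ^ (-s)) (T : ℝ) {t : ℝ} (ht : 0 < t) :
    ‖t ^ (α - 1) * F t‖ ≤ if t ≤ T then a * t ^ (α - 1 - r) else b * t ^ (α - 1 - s) := by
  have hpow : 0 ≤ t ^ (α - 1) := Real.rpow_nonneg ht.le _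
  rw [norm_mul, Real.norm_of_nonneg hpow, Real.norm_eq_abs]
  split_ifs
  · calc t ^ (α - 1) * |F t| ≤ t ^ (α - 1) * (a * t ^ (-r)) := by gcongr; exact hF₀ t ht
      _ = a * t ^ (α - 1 - r) := by rw [sub_eq_add_neg (α - 1) r, Real.rpow_add ht]; ring
  · calc t ^ (α - 1) * |F t| ≤ t ^ (α - 1) * (b * t ^ (-s)) := by gcongr; exact hF₁ t ht
      _ = b * t ^ (α - 1 - s) := by rw [sub_eq_add_neg (α - 1) s, Real.rpow_add ht]; ring

lemma integrableOn_Ioi_rpow_mul_of_decay (hr : r < α) (hs : α < s)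
    (hF : AEStronglyMeasurable F (volume.restrict (Ioi 0)))
    (hF₀ : ∀ t > 0, |F t| ≤ a * t ^ (-r)) (hF₁ : ∀ t > 0, |F t| ≤ b * t ^ (-s)) :
    IntegrableOn (fun t => t ^ (α - 1) * F t) (Ioi 0) :=
  (integrableOn_Ioi_ite_rpow one_pos (by linarith) (by linarith) a b).mono'
    ((by fun_prop : Measurable fun t : ℝ => t ^ (α - 1)).aestronglyMeasurable.mul hF)
    ((ae_restrict_mem measurableSet_Ioi).mono fun _ ht => norm_rpow_mul_le_ite hF₀ hF₁ 1 ht)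

lemma abs_integral_Ioi_rpow_mul_le_of_decay (hr : r < α) (hs : α < s)
    (hF₀ : ∀ t > 0, |F t| ≤ a * t ^ (-r)) (hF₁ : ∀ t > 0, |F t| ≤ b * t ^ (-s))
    {T : ℝ} (hT : 0 < T) :
    |∫ t in Ioi 0, t ^ (α - 1) * F t| ≤ a / (α - r) * T ^ (α - r) + b / (s - α) * T ^ (α - s) := by
  have hval := integral_Ioi_ite_rpow hT (a := α - 1 - r) (b := α - 1 - s) (by linarith)
    (by linarith) a b
  rw [show α - 1 - r + 1 = α - r by ring, show α - 1 - s + 1 = α - s by ring] at hval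
  calc |∫ t in Ioi 0, t ^ (α - 1) * F t|
      ≤ ∫ t in Ioi 0, (if t ≤ T then a * t ^ (α - 1 - r) else b * t ^ (α - 1 - s)) :=
        norm_integral_le_of_norm_le
          (integrableOn_Ioi_ite_rpow hT (by linarith) (by linarith) a b)
          ((ae_restrict_mem measurableSet_Ioi).mono fun _ ht => norm_rpow_mul_le_ite hF₀ hF₁ T ht)
    _ = a / (α - r) * T ^ (α - r) + b / (s - α) * T ^ (α - s) := by
        rw [hval, show s - α = -(α - s) by ring, div_neg]; ring

lemma abs_integral_Ioi_rpow_mul_le_of_parabolic_decay (hr : r < α) (hs : α < s)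
    (hrs : s = r + 1 / 2) {D : ℝ} (hD : 0 ≤ D) (hF₀ : ∀ t > 0, |F t| ≤ a * t ^ (-r))
    (hF₁ : ∀ t > 0, |F t| ≤ b * D * t ^ (-s)) :
    |∫ t in Ioi 0, t ^ (α - 1) * F t| ≤ (a / (α - r) + b / (s - α)) * D ^ (2 * (α - r)) := by
  subst hrs
  rcases hD.eq_or_lt with rfl | hD
  · have hzero : EqOn (fun t => t ^ (α - 1) * F t) 0 (Ioi 0) := fun t ht => by
      simp [show F t = 0 by simpa using hF₁ t ht]
    rw [setIntegral_congr_fun measurableSet_Ioi hzero, Real.zero_rpow (by linarith)]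
    simp
  · have hsq : (D ^ 2 : ℝ) ^ (α - r) = D ^ (2 * (α - r)) := by
      rw [← Real.rpow_natCast, ← Real.rpow_mul hD.le]; norm_num
    have hsq' : D * (D ^ 2 : ℝ) ^ (α - (r + 1 / 2)) = D ^ (2 * (α - r)) := by
      rw [← Real.rpow_natCast, ← Real.rpow_mul hD.le,
        ← Real.rpow_one_add' hD.le (ne_of_gt (by push_cast; linarith))]
      congr 1; push_cast; ring
    calc _ ≤ a / (α - r) * (D ^ 2) ^ (α - r) +
          b * D / (r + 1 / 2 - α) * (D ^ 2) ^ (α - (r + 1 / 2)) :=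
          abs_integral_Ioi_rpow_mul_le_of_decay hr hs hF₀ hF₁ (by positivity)
      _ = _ := by rw [hsq, mul_div_right_comm, mul_assoc _ D, hsq']; ring

end Decay

section Kernel

variable {X : Type*} [MeasurableSpace X] {μ : Measure X}

theorem exists_memLp_two_integral_mul_eq {L : (X → ℝ) → ℝ} {C : ℝ} (hC : 0 ≤ C)
    (hadd : ∀ f g, MemLp f 2 μ → MemLp g 2 μ → L (f + g) = L f + L g)
    (hsmul : ∀ (c : ℝ) f, MemLp f 2 μ → L (c • f) = c * L f)
    (hae : ∀ f g, f =ᵐ[μ] g → L f = L g)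
    (hbound : ∀ f, MemLp f 2 μ → |L f| ≤ C * (eLpNorm f 2 μ).toReal) :
    ∃ h : X → ℝ, MemLp h 2 μ ∧ (eLpNorm h 2 μ).toReal ≤ C ∧
      ∀ f, MemLp f 2 μ → ∫ q, h q * f q ∂μ = L f := by
  let Λ : Lp ℝ 2 μ →ₗ[ℝ] ℝ :=
    { toFun := fun f => L f
      map_add' := fun f g => by
        rw [hae _ _ (Lp.coeFn_add f g), hadd _ _ (Lp.memLp f) (Lp.memLp g)]
      map_smul' := fun c f => by
        rw [hae _ _ (Lp.coeFn_smul c f), hsmul _ _ (Lp.memLp f)]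
        rfl }
  have hΛ : ∀ f, ‖Λ f‖ ≤ C * ‖f‖ := fun f => hbound _ (Lp.memLp f)
  set h := (InnerProductSpace.toDual ℝ (Lp ℝ 2 μ)).symm (Λ.mkContinuous C hΛ)
  refine ⟨h, Lp.memLp h, ?_, fun f hf => ?_⟩
  · rw [← Lp.norm_def, LinearIsometryEquiv.norm_map]
    exact LinearMap.mkContinuous_norm_le _ hC hΛ
  · have hriesz :=
      InnerProductSpace.toDual_symm_apply (x := hf.toLp f) (y := Λ.mkContinuous C hΛ)
    rw [L2.inner_def] at hriesz
    calc ∫ q, h q * f q ∂μ = ∫ q, inner ℝ (h q) (hf.toLp f q) ∂μ :=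
          integral_congr_ae (hf.coeFn_toLp.mono fun q hq => by simp [hq, mul_comm])
      _ = L (hf.toLp f) := hriesz
      _ = L f := hae _ _ hf.coeFn_toLp

/-- `P_t f (z)`. -/
noncomputable def kernelIntegral (μ : Measure X) (p : ℝ → X → X → ℝ) (t : ℝ) (f : X → ℝ)
    (z : X) : ℝ :=
  ∫ q, p t z q * f q ∂μ

variable {p : ℝ → X → X → ℝ} {t : ℝ} {z : X} {f g : X → ℝ}

lemma kernelIntegral_add (hp : MemLp (p t z) 2 μ) (hf : MemLp f 2 μ) (hg : MemLp g 2 μ) :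
    kernelIntegral μ p t (f + g) z = kernelIntegral μ p t f z + kernelIntegral μ p t g z := by
  simp only [kernelIntegral, Pi.add_apply, mul_add]
  exact integral_add (hp.integrable_mul hf) (hp.integrable_mul hg)

lemma kernelIntegral_smul (c : ℝ) :
    kernelIntegral μ p t (c • f) z = c * kernelIntegral μ p t f z := by
  simp only [kernelIntegral, Pi.smul_apply, smul_eq_mul, mul_left_comm _ c, integral_const_mul]

lemma kernelIntegral_congr_ae (hfg : f =ᵐ[μ] g) :
    kernelIntegral μ p t f z = kernelIntegral μ p t g z :=
  integral_congr_ae (hfg.mono fun q hq => congrArg (p t z q * ·) hq)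

lemma stronglyMeasurable_kernelIntegral [SFinite μ]
    (hp : Measurable fun q : ℝ × X × X => p q.1 q.2.1 q.2.2) (hf : AEStronglyMeasurable f μ)
    (z : X) : StronglyMeasurable fun t => kernelIntegral μ p t f z := by
  have hmk : (fun t => kernelIntegral μ p t f z) = fun t => kernelIntegral μ p t (hf.mk f) z :=
    funext fun t => kernelIntegral_congr_ae hf.ae_eq_mk
  rw [hmk]
  have hpz : Measurable fun q : ℝ × X => p q.1 z q.2 :=
    hp.comp (measurable_fst.prodMk (measurable_const.prodMk measurable_snd))
  exact (hpz.stronglyMeasurable.mul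
    (hf.stronglyMeasurable_mk.comp_measurable measurable_snd)).integral_prod_right'

/-- `G_α f (x) - G_α f (y)`, where `G_α = Γ(α)⁻¹ ∫₀^∞ t^(α-1) P_t dt`. -/
noncomputable def fracPotentialDiff (μ : Measure X) (p : ℝ → X → X → ℝ) (α : ℝ) (x y : X)
    (f : X → ℝ) : ℝ :=
  (Real.Gamma α)⁻¹ *
    ∫ t in Ioi 0, t ^ (α - 1) * (kernelIntegral μ p t f x - kernelIntegral μ p t f y)

variable {α : ℝ} {x y : X}

lemma fracPotentialDiff_add (hp : ∀ t > 0, ∀ z, MemLp (p t z) 2 μ) (hf : MemLp f 2 μ)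
    (hg : MemLp g 2 μ)
    (hfi : IntegrableOn (fun t => t ^ (α - 1) *
      (kernelIntegral μ p t f x - kernelIntegral μ p t f y)) (Ioi 0))
    (hgi : IntegrableOn (fun t => t ^ (α - 1) *
      (kernelIntegral μ p t g x - kernelIntegral μ p t g y)) (Ioi 0)) :
    fracPotentialDiff μ p α x y (f + g) =
      fracPotentialDiff μ p α x y f + fracPotentialDiff μ p α x y g := by
  rw [fracPotentialDiff, fracPotentialDiff, fracPotentialDiff, ← mul_add, ← integral_add hfi hgi]
  congr 1
  refine setIntegral_congr_fun measurableSet_Ioi fun t ht => ?_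
  simp only [kernelIntegral_add (hp t ht _) hf hg]
  ring

lemma fracPotentialDiff_smul (c : ℝ) :
    fracPotentialDiff μ p α x y (c • f) = c * fracPotentialDiff μ p α x y f := by
  simp only [fracPotentialDiff, kernelIntegral_smul, ← mul_sub, mul_left_comm _ c,
    integral_const_mul]

lemma fracPotentialDiff_congr_ae (hfg : f =ᵐ[μ] g) :
    fracPotentialDiff μ p α x y f = fracPotentialDiff μ p α x y g := by
  simp only [fracPotentialDiff, kernelIntegral_congr_ae hfg]

end Kernel

theorem frac_kernel_L2_difference_general {X : Type*} [MeasurableSpace X] (μ : Measure X)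
    [SigmaFinite μ] (n : ℕ) (d : X → X → ℝ) (hd : ∀ x y, 0 ≤ d x y)
    (α : ℝ) (hα1 : ((n : ℝ) + 1) / 2 < α) (hα2 : α < ((n : ℝ) + 2) / 2)
    (p : ℝ → X → X → ℝ)
    (hmeas : Measurable fun q : ℝ × X × X => p q.1 q.2.1 q.2.2)
    (hL2 : ∀ t : ℝ, 0 < t → ∀ x, MeasureTheory.MemLp (p t x) 2 μ)
    (C₀ C₁ : ℝ) (hC₀ : 0 < C₀) (hC₁ : 0 < C₁)
    (hultra : ∀ f : X → ℝ, MeasureTheory.MemLp f 2 μ → ∀ t : ℝ, 0 < t → ∀ x,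
      |∫ q, p t x q * f q ∂μ| ≤
        C₀ * t ^ (-((n : ℝ) + 1) / 2) * (MeasureTheory.eLpNorm f 2 μ).toReal)
    (hgrad : ∀ f : X → ℝ, MeasureTheory.MemLp f 2 μ → ∀ t : ℝ, 0 < t → ∀ x y,
      |(∫ q, p t x q * f q ∂μ) - ∫ q, p t y q * f q ∂μ| ≤
        C₁ * d x y * t ^ (-((n : ℝ) + 2) / 2) * (MeasureTheory.eLpNorm f 2 μ).toReal)
    (x y : X) :
    ∃ h : X → ℝ, MeasureTheory.MemLp h 2 μ ∧
      (MeasureTheory.eLpNorm h 2 μ).toReal ≤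
        (Real.Gamma α)⁻¹ * (2 * C₀ / (α - ((n : ℝ) + 1) / 2) + C₁ / (((n : ℝ) + 2) / 2 - α)) *
          d x y ^ (2 * α - ((n : ℝ) + 1)) ∧
      ∀ f : X → ℝ, MeasureTheory.MemLp f 2 μ →
        (∫ q, h q * f q ∂μ) =
          (Real.Gamma α)⁻¹ * ∫ t in Set.Ioi (0 : ℝ),
            t ^ (α - 1) * ((∫ q, p t x q * f q ∂μ) - ∫ q, p t y q * f q ∂μ) := by
  have hsmall : ∀ f, MemLp f 2 μ → ∀ t > 0,
      |kernelIntegral μ p t f x - kernelIntegral μ p t f y| ≤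
        2 * C₀ * (eLpNorm f 2 μ).toReal * t ^ (-(((n : ℝ) + 1) / 2)) := by
    intro f hf t ht
    have hx := hultra f hf t ht x
    have hy := hultra f hf t ht y
    rw [neg_div] at hx hy
    unfold kernelIntegral
    exact (abs_sub _ _).trans (by linarith)
  have hlarge : ∀ f, MemLp f 2 μ → ∀ t > 0,
      |kernelIntegral μ p t f x - kernelIntegral μ p t f y| ≤
        C₁ * (eLpNorm f 2 μ).toReal * d x y * t ^ (-(((n : ℝ) + 2) / 2)) := by
    intro f hf t ht
    have hxy := hgrad f hf t ht x y
    rw [neg_div] at hxy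
    unfold kernelIntegral
    linarith
  have hint : ∀ f, MemLp f 2 μ → IntegrableOn (fun t => t ^ (α - 1) *
      (kernelIntegral μ p t f x - kernelIntegral μ p t f y)) (Ioi 0) := fun f hf =>
    integrableOn_Ioi_rpow_mul_of_decay hα1 hα2
      ((stronglyMeasurable_kernelIntegral hmeas hf.1 x).sub
        (stronglyMeasurable_kernelIntegral hmeas hf.1 y)).aestronglyMeasurable
      (hsmall f hf) (hlarge f hf)
  have hα : 0 < α := (by positivity : (0 : ℝ) < ((n : ℝ) + 1) / 2).trans hα1
  have hΓ : 0 < (Real.Gamma α)⁻¹ := inv_pos.2 (Real.Gamma_pos_of_pos hα)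
  have hexp : 2 * α - ((n : ℝ) + 1) = 2 * (α - ((n : ℝ) + 1) / 2) := by ring
  refine exists_memLp_two_integral_mul_eq (L := fracPotentialDiff μ p α x y)
    (by have := Real.rpow_nonneg (hd x y) (2 * α - ((n : ℝ) + 1)); positivity)
    (fun f g hf hg => fracPotentialDiff_add hL2 hf hg (hint f hf) (hint g hg))
    (fun c _ _ => fracPotentialDiff_smul c) (fun _ _ => fracPotentialDiff_congr_ae)
    fun f hf => ?_
  have hI := abs_integral_Ioi_rpow_mul_le_of_parabolic_decay hα1 hα2 (by ring) (hd x y)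
    (hsmall f hf) (hlarge f hf)
  rw [fracPotentialDiff, abs_mul, abs_of_pos hΓ, hexp]
  exact (mul_le_mul_of_nonneg_left hI hΓ.le).trans_eq (by ring)

/-- Riesz-representation form of the kernel estimate: under the same hypotheses as the Hölder
bound for the fractional operator, for all `x, y` there exists `h ∈ L²(μ)` with
`‖h‖_{L²(μ)} ≤ C d(x,y)^{2α−(n+1)}` representing the bounded linear functional
`f ↦ (1/Γ(α)) ∫_0^∞ t^{α−1}(P_t f(x) − P_t f(y)) dt` on `L²(μ)`, where
`C = (1/Γ(α))(2C₀/(α−(n+1)/2) + C₁/((n+2)/2−α))`. -/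
theorem frac_kernel_L2_difference {X : Type*} [MeasurableSpace X] (μ : Measure X)
    [SigmaFinite μ] (n : ℕ) (hn : 1 ≤ n) (d : X → X → ℝ) (hd : ∀ x y, 0 ≤ d x y)
    (α : ℝ) (hα1 : ((n : ℝ) + 1) / 2 < α) (hα2 : α < ((n : ℝ) + 2) / 2)
    (p : ℝ → X → X → ℝ)
    (hmeas : Measurable fun q : ℝ × X × X => p q.1 q.2.1 q.2.2)
    (hnonneg : ∀ t x y, 0 ≤ p t x y)
    (hL2 : ∀ t : ℝ, 0 < t → ∀ x, MeasureTheory.MemLp (p t x) 2 μ)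
    (C₀ C₁ : ℝ) (hC₀ : 0 < C₀) (hC₁ : 0 < C₁)
    (hultra : ∀ f : X → ℝ, MeasureTheory.MemLp f 2 μ → ∀ t : ℝ, 0 < t → ∀ x,
      |∫ q, p t x q * f q ∂μ| ≤
        C₀ * t ^ (-((n : ℝ) + 1) / 2) * (MeasureTheory.eLpNorm f 2 μ).toReal)
    (hgrad : ∀ f : X → ℝ, MeasureTheory.MemLp f 2 μ → ∀ t : ℝ, 0 < t → ∀ x y,
      |(∫ q, p t x q * f q ∂μ) - ∫ q, p t y q * f q ∂μ| ≤
        C₁ * d x y * t ^ (-((n : ℝ) + 2) / 2) * (MeasureTheory.eLpNorm f 2 μ).toReal)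
    (x y : X) :
    ∃ h : X → ℝ, MeasureTheory.MemLp h 2 μ ∧
      (MeasureTheory.eLpNorm h 2 μ).toReal ≤
        (Real.Gamma α)⁻¹ * (2 * C₀ / (α - ((n : ℝ) + 1) / 2) + C₁ / (((n : ℝ) + 2) / 2 - α)) *
          d x y ^ (2 * α - ((n : ℝ) + 1)) ∧
      ∀ f : X → ℝ, MeasureTheory.MemLp f 2 μ →
        (∫ q, h q * f q ∂μ) =
          (Real.Gamma α)⁻¹ * ∫ t in Set.Ioi (0 : ℝ),
            t ^ (α - 1) * ((∫ q, p t x q * f q ∂μ) - ∫ q, p t y q * f q ∂μ) :=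
  frac_kernel_L2_difference_general μ n d hd α hα1 hα2 p hmeas hL2 C₀ C₁ hC₀ hC₁ hultra hgrad x y
end

section
/- Let n ≥ 1 be an integer, (n+1)/2 < α < (n+2)/2, and let C > 0 and C₄ > 0. Set ρ = (2α − n)/(2 − (2α − n)); note 1 < ρ < ∞. Then there exist constants C₁, C₂ > 0 such that for every t ≥ 1, ∫_0^∞ r^{2n+1} exp( C t^{2α−n} r^{4α−2(n+1)} − C₄ r² ) dr ≤ C₁ exp( C₂ t^ρ ). -/
open MeasureTheory Set Real

/-!
Write `D = 2α - n`, so that the exponent of `r` is `β = 2D - 2 ∈ (0, 2)`. Young's inequality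
with the conjugate exponents `2/β` and `2/(2-β)` absorbs the growing term into half of the
Gaussian one, `C t^D r^β ≤ (C₄/2) r² + K t^ρ`, since `D · 2/(2-β) = D/(2-D) = ρ`. The integral
is then at most `exp (K t^ρ)` times the finite Gaussian moment `∫₀^∞ r^{2n+1} e^{-C₄ r²/2} dr`.
-/

theorem mul_rpow_le_mul_sq_add_rpow {β c a r : ℝ} (hβ0 : 0 < β) (hβ2 : β < 2) (hc : 0 < c)
    (ha : 0 ≤ a) (hr : 0 ≤ r) :
    a * r ^ β ≤ c * r ^ 2 + (c ^ (-(β / 2)) * a) ^ (2 / (2 - β)) := by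
  have hpq : (2 / β).HolderConjugate (2 / (2 - β)) := by
    rw [Real.holderConjugate_iff]
    refine ⟨by rw [lt_div_iff₀ hβ0]; linarith, ?_⟩
    field_simp [(by linarith : 2 - β ≠ 0)]
    ring
  have hsplit : a * r ^ β = (c ^ (β / 2) * r ^ β) * (c ^ (-(β / 2)) * a) := by
    rw [rpow_neg hc.le]
    field_simp [(rpow_pos_of_pos hc (β / 2)).ne']
  have hfirst : (c ^ (β / 2) * r ^ β) ^ (2 / β) = c * r ^ 2 := by
    rw [mul_rpow (by positivity) (by positivity), ← rpow_mul hc.le, ← rpow_mul hr,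
      ← rpow_natCast r 2]
    field_simp
    simp
  calc a * r ^ β = (c ^ (β / 2) * r ^ β) * (c ^ (-(β / 2)) * a) := hsplit
    _ ≤ (c ^ (β / 2) * r ^ β) ^ (2 / β) / (2 / β)
          + (c ^ (-(β / 2)) * a) ^ (2 / (2 - β)) / (2 / (2 - β)) :=
        young_inequality_of_nonneg (by positivity) (by positivity) hpq
    _ ≤ c * r ^ 2 + (c ^ (-(β / 2)) * a) ^ (2 / (2 - β)) := by
        rw [hfirst]
        gcongr
        · exact div_le_self (by positivity) hpq.lt.le
        · exact div_le_self (by positivity) hpq.symm.lt.le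

theorem lintegral_pow_mul_exp_le_of_le_sub_mul_sq (k : ℕ) {c M : ℝ} (hc : 0 < c)
    {φ : ℝ → ℝ} (hφ : ∀ r, 0 < r → φ r ≤ M - c * r ^ 2) :
    ∫⁻ r in Ioi 0, ENNReal.ofReal (r ^ k * exp (φ r)) ≤
      ENNReal.ofReal ((∫ r in Ioi 0, r ^ k * exp (-c * r ^ 2)) * exp M) := by
  have hint : IntegrableOn (fun r : ℝ ↦ r ^ k * exp (-c * r ^ 2)) (Ioi 0) := by
    simpa only [rpow_natCast] using
      integrableOn_rpow_mul_exp_neg_mul_sq hc (s := k) (by linarith [k.cast_nonneg (α := ℝ)])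
  have hnonneg : 0 ≤ᵐ[volume.restrict (Ioi 0)] fun r : ℝ ↦ r ^ k * exp (-c * r ^ 2) :=
    (ae_restrict_iff' measurableSet_Ioi).2 <| .of_forall fun r (hr : 0 < r) ↦ by positivity
  calc ∫⁻ r in Ioi 0, ENNReal.ofReal (r ^ k * exp (φ r))
      ≤ ∫⁻ r in Ioi 0,
          ENNReal.ofReal (exp M) * ENNReal.ofReal (r ^ k * exp (-c * r ^ 2)) := by
        refine setLIntegral_mono_ae' measurableSet_Ioi (.of_forall fun r (hr : 0 < r) ↦ ?_)
        rw [← ENNReal.ofReal_mul (exp_pos M).le, mul_left_comm, ← exp_add]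
        gcongr
        linarith [hφ r hr]
    _ = ENNReal.ofReal (exp M) * ENNReal.ofReal (∫ r in Ioi 0, r ^ k * exp (-c * r ^ 2)) := by
        rw [lintegral_const_mul' _ _ ENNReal.ofReal_ne_top,
          ofReal_integral_eq_lintegral_ofReal hint hnonneg]
    _ = ENNReal.ofReal ((∫ r in Ioi 0, r ^ k * exp (-c * r ^ 2)) * exp M) := by
        rw [← ENNReal.ofReal_mul (exp_pos M).le, mul_comm]

theorem laplace_method_bound_general (n : ℕ) (α C C₄ : ℝ)
    (hα1 : ((n : ℝ) + 1) / 2 < α) (hα2 : α < ((n : ℝ) + 2) / 2)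
    (hC : 0 < C) (hC₄ : 0 < C₄) :
    1 < (2 * α - (n : ℝ)) / (2 - (2 * α - (n : ℝ))) ∧
    ∃ C₁ : ℝ, 0 < C₁ ∧ ∃ C₂ : ℝ, 0 < C₂ ∧ ∀ t : ℝ, 1 ≤ t →
      (∫⁻ r in Set.Ioi (0 : ℝ), ENNReal.ofReal (r ^ (2 * n + 1) *
          Real.exp (C * t ^ (2 * α - (n : ℝ)) * r ^ (4 * α - 2 * ((n : ℝ) + 1)) -
            C₄ * r ^ 2))) ≤
        ENNReal.ofReal (C₁ *
          Real.exp (C₂ * t ^ ((2 * α - (n : ℝ)) / (2 - (2 * α - (n : ℝ)))))) := by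
  set D := 2 * α - (n : ℝ)
  set β := 4 * α - 2 * ((n : ℝ) + 1)
  have hβD : β = 2 * D - 2 := by ring
  refine ⟨(one_lt_div (by linarith)).2 (by linarith), ?_⟩
  set c := C₄ / 2 with hc
  set I := ∫ r in Ioi 0, r ^ (2 * n + 1) * exp (-c * r ^ 2)
  have hI : 0 ≤ I := setIntegral_nonneg measurableSet_Ioi fun r (hr : 0 < r) ↦ by positivity
  set K := (c ^ (-(β / 2)) * C) ^ (2 / (2 - β))
  refine ⟨I + 1, by linarith, K, by positivity, fun t ht ↦ ?_⟩
  have ht0 : 0 < t := by linarith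
  have hconst : (c ^ (-(β / 2)) * (C * t ^ D)) ^ (2 / (2 - β)) = K * t ^ (D / (2 - D)) := by
    rw [← mul_assoc, mul_rpow (by positivity) (by positivity), ← rpow_mul ht0.le]
    congr 2
    rw [hβD, show 2 - (2 * D - 2) = 2 * (2 - D) by ring]
    field_simp
  have hexponent : ∀ r, 0 < r →
      C * t ^ D * r ^ β - C₄ * r ^ 2 ≤ K * t ^ (D / (2 - D)) - c * r ^ 2 := fun r hr ↦ by
    have hyoung := mul_rpow_le_mul_sq_add_rpow (β := β) (c := c) (by linarith) (by linarith)
      (half_pos hC₄) (by positivity : 0 ≤ C * t ^ D) hr.le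
    rw [hconst] at hyoung
    have hhalf : C₄ * r ^ 2 = c * r ^ 2 + c * r ^ 2 := by rw [hc]; ring
    have hcr : 0 ≤ c * r ^ 2 := by positivity
    linarith
  calc _ ≤ ENNReal.ofReal (I * exp (K * t ^ (D / (2 - D)))) :=
        lintegral_pow_mul_exp_le_of_le_sub_mul_sq _ (half_pos hC₄) hexponent
    _ ≤ _ := ENNReal.ofReal_le_ofReal (by gcongr; linarith)

/-- Laplace-method bound: for an integer `n ≥ 1`, `(n+1)/2 < α < (n+2)/2` and `C, C₄ > 0`,
with `ρ = (2α−n)/(2−(2α−n))` one has `1 < ρ`, and there exist `C₁, C₂ > 0` such that for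
every `t ≥ 1`:
`∫_0^∞ r^{2n+1} exp(C t^{2α−n} r^{4α−2(n+1)} − C₄ r²) dr ≤ C₁ exp(C₂ t^ρ)`. -/
theorem laplace_method_bound (n : ℕ) (hn : 1 ≤ n) (α C C₄ : ℝ)
    (hα1 : ((n : ℝ) + 1) / 2 < α) (hα2 : α < ((n : ℝ) + 2) / 2)
    (hC : 0 < C) (hC₄ : 0 < C₄) :
    1 < (2 * α - (n : ℝ)) / (2 - (2 * α - (n : ℝ))) ∧
    ∃ C₁ : ℝ, 0 < C₁ ∧ ∃ C₂ : ℝ, 0 < C₂ ∧ ∀ t : ℝ, 1 ≤ t →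
      (∫⁻ r in Set.Ioi (0 : ℝ), ENNReal.ofReal (r ^ (2 * n + 1) *
          Real.exp (C * t ^ (2 * α - (n : ℝ)) * r ^ (4 * α - 2 * ((n : ℝ) + 1)) -
            C₄ * r ^ 2))) ≤
        ENNReal.ofReal (C₁ *
          Real.exp (C₂ * t ^ ((2 * α - (n : ℝ)) / (2 - (2 * α - (n : ℝ)))))) :=
  laplace_method_bound_general n α C C₄ hα1 hα2 hC hC₄
end
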